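/- Let g : (0,∞) → ℂ satisfy g(1/(Ny)) = g(y) for all y > 0, and suppose g(y) = p(y) + h(y) on [1/√N, ∞) where |h(y)| ≤ Ce^{-πy} and p(y) = a y^w + b y^{1-w}. Then for Re(s) > max(Re(w), Re(1-w)), Λ(s) := ∫_0^∞ (g(y) - p(y)) y^{s-1} dy equals ∫_{1/√N}^∞ h(y)(y^s + N^{-s}y^{-s}) dy/y + a(√N)^{-s-w}/(s-w) + b(√N)^{w-1-s}/(s+w-1) - a(√N)^{-s-w}/(s+w) - b(√N)^{-s+w-1}/(s-w+1), and hence extends meromorphically in s to all of ℂ with (at most) simple poles at s = w, s = -w, s = 1-w, s = w-1. -/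

import Mathlib

/-!
Split `∫₀^∞` at `c = 1/√N`, the fixed point of the involution `y ↦ 1/(N y)`. On `(c, ∞)` the
integrand is `y^(s-1) h(y)`. On `(0, c)` the substitution `y = 1/(N u)` and the invariance of `g`
turn `∫₀^c g(y) y^(s-1) dy` into `N^(-s) ∫_c^∞ (p(u) + h(u)) u^(-s-1) du`; what is left are
monomial integrals over `(0, c)` and `(c, ∞)`, which converge exactly when
`Re s > max(Re w, Re(1 - w))`. The `h`-part is `M(s) + N^(-s) M(-s)` for the Mellin transform `M`
of `h · 1_[c,∞)`, which is entire because `h` decays exponentially and vanishes near `0`.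
-/

open MeasureTheory Set Filter Asymptotics Topology

lemma Complex.ofReal_one_div_cpow {x : ℝ} (hx : 0 ≤ x) (σ : ℂ) :
    ((1 / x : ℝ) : ℂ) ^ σ = (x : ℂ) ^ (-σ) := by
  rw [one_div, Complex.ofReal_inv, Complex.inv_cpow_ofReal_nonneg hx, Complex.cpow_neg]

lemma cpow_neg_mul_one_div_sqrt_cpow {N : ℝ} (hN : 0 < N) (s σ : ℂ) :
    (N : ℂ) ^ (-s) * ((1 / √N : ℝ) : ℂ) ^ σ = (√N : ℂ) ^ (-2 * s - σ) := by
  have hr : (√N : ℂ) ≠ 0 := by exact_mod_cast (Real.sqrt_pos.2 hN).ne'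
  have hN' : (N : ℂ) = √N * √N := by exact_mod_cast (Real.mul_self_sqrt hN.le).symm
  rw [Complex.ofReal_one_div_cpow (Real.sqrt_nonneg N), hN',
    Complex.mul_cpow_ofReal_nonneg (Real.sqrt_nonneg N) (Real.sqrt_nonneg N),
    ← Complex.cpow_add _ _ hr, ← Complex.cpow_add _ _ hr]
  ring_nf

section Inversion

variable {N c : ℝ}

lemma involutive_one_div_mul (hN : N ≠ 0) : Function.Involutive fun y : ℝ => 1 / (N * y) := by
  intro y
  rcases eq_or_ne y 0 with rfl | hy
  · simp
  · field_simp

lemma image_one_div_mul_Ioi (hN : 0 < N) (hc : 0 < c) :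
    (fun u : ℝ => 1 / (N * u)) '' Ioi c = Ioo 0 (1 / (N * c)) := by
  rw [image_eq_preimage_of_inverse (involutive_one_div_mul hN.ne').leftInverse
    (involutive_one_div_mul hN.ne').rightInverse]
  ext y
  simp only [mem_preimage, mem_Ioi, mem_Ioo]
  constructor
  · intro hy
    have hy0 : 0 < y := pos_of_mul_pos_right (one_div_pos.1 (hc.trans hy)) hN.le
    refine ⟨hy0, ?_⟩
    rw [lt_div_iff₀ (by positivity)] at hy ⊢
    linarith
  · rintro ⟨hy0, hy⟩
    rw [lt_div_iff₀ (by positivity)] at hy ⊢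
    linarith

lemma hasDerivAt_one_div_mul {u : ℝ} (hu : u ≠ 0) :
    HasDerivAt (fun y : ℝ => 1 / (N * y)) (-(1 / (N * u ^ 2))) u := by
  have hfun : (fun y : ℝ => 1 / (N * y)) = fun y => N⁻¹ * y⁻¹ := by
    ext y
    rw [one_div, mul_inv]
  rw [hfun]
  exact ((hasDerivAt_inv hu).const_mul N⁻¹).congr_deriv (by ring)

lemma eqOn_abs_deriv_smul_comp_one_div_mul (hN : 0 < N) (hc : 0 < c) (F : ℝ → ℂ) (s : ℂ) :
    EqOn (fun u => |-(1 / (N * u ^ 2))| • (F (1 / (N * u)) * ((1 / (N * u) : ℝ) : ℂ) ^ (s - 1)))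
      (fun u => (N : ℂ) ^ (-s) * (F (1 / (N * u)) * (u : ℂ) ^ (-s - 1))) (Ioi c) := by
  intro u hu
  have hu : 0 < u := hc.trans hu
  have hN' : (N : ℂ) ≠ 0 := by exact_mod_cast hN.ne'
  have hu' : (u : ℂ) ≠ 0 := by exact_mod_cast hu.ne'
  simp only [Complex.real_smul]
  rw [abs_neg, abs_of_pos (by positivity), Complex.ofReal_one_div_cpow (by positivity),
    Complex.ofReal_mul, Complex.mul_cpow_ofReal_nonneg hN.le hu.le,
    show -(s - 1) = -s + 1 by ring, Complex.cpow_add _ _ hN', Complex.cpow_add _ _ hu',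
    Complex.cpow_sub _ _ hu', Complex.cpow_one, Complex.cpow_one]
  push_cast
  field_simp

theorem integrableOn_Ioo_mul_cpow_iff (hN : 0 < N) (hc : 0 < c) (F : ℝ → ℂ) (s : ℂ) :
    IntegrableOn (fun y => F y * (y : ℂ) ^ (s - 1)) (Ioo 0 (1 / (N * c)))
      ↔ IntegrableOn (fun u => F (1 / (N * u)) * (u : ℂ) ^ (-s - 1)) (Ioi c) := by
  have hN' : (N : ℂ) ^ (-s) ≠ 0 := by simp [Complex.cpow_eq_zero_iff, hN.ne']
  rw [← image_one_div_mul_Ioi hN hc, integrableOn_image_iff_integrableOn_abs_deriv_smul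
      measurableSet_Ioi (fun u hu => (hasDerivAt_one_div_mul (hc.trans hu).ne').hasDerivWithinAt)
      (involutive_one_div_mul hN.ne').injective.injOn,
    integrableOn_congr_fun (eqOn_abs_deriv_smul_comp_one_div_mul hN hc F s) measurableSet_Ioi]
  exact integrable_const_mul_iff (isUnit_iff_ne_zero.2 hN') _

theorem setIntegral_Ioo_mul_cpow_eq (hN : 0 < N) (hc : 0 < c) (F : ℝ → ℂ) (s : ℂ) :
    ∫ y in Ioo 0 (1 / (N * c)), F y * (y : ℂ) ^ (s - 1)
      = (N : ℂ) ^ (-s) * ∫ u in Ioi c, F (1 / (N * u)) * (u : ℂ) ^ (-s - 1) := by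
  rw [← image_one_div_mul_Ioi hN hc, integral_image_eq_integral_abs_deriv_smul
      measurableSet_Ioi (fun u hu => (hasDerivAt_one_div_mul (hc.trans hu).ne').hasDerivWithinAt)
      (involutive_one_div_mul hN.ne').injective.injOn,
    setIntegral_congr_fun measurableSet_Ioi (eqOn_abs_deriv_smul_comp_one_div_mul hN hc F s),
    integral_const_mul]

end Inversion

section PowerIntegrals

variable {c : ℝ} {σ : ℂ}

lemma integrableOn_Ioo_cpow_sub_one (hσ : 0 < σ.re) (hc : 0 < c) :
    IntegrableOn (fun y : ℝ => (y : ℂ) ^ (σ - 1)) (Ioo 0 c) :=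
  (intervalIntegral.integrableOn_Ioo_cpow_iff hc).2 (by simpa using hσ)

lemma setIntegral_Ioo_cpow_sub_one (hσ : 0 < σ.re) (hc : 0 ≤ c) :
    ∫ y in Ioo 0 c, (y : ℂ) ^ (σ - 1) = (c : ℂ) ^ σ / σ := by
  have hσ0 : σ ≠ 0 := fun h => by simp [h] at hσ
  rw [← integral_Ioc_eq_integral_Ioo, ← intervalIntegral.integral_of_le hc,
    integral_cpow (Or.inl (by simpa using hσ)), sub_add_cancel, Complex.ofReal_zero,
    Complex.zero_cpow hσ0, sub_zero]

lemma integrableOn_Ioi_cpow_neg_sub_one (hσ : 0 < σ.re) (hc : 0 < c) :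
    IntegrableOn (fun u : ℝ => (u : ℂ) ^ (-σ - 1)) (Ioi c) :=
  integrableOn_Ioi_cpow_of_lt (by simp; linarith) hc

lemma setIntegral_Ioi_cpow_neg_sub_one (hσ : 0 < σ.re) (hc : 0 < c) :
    ∫ u in Ioi c, (u : ℂ) ^ (-σ - 1) = (c : ℂ) ^ (-σ) / σ := by
  rw [integral_Ioi_cpow_of_lt (by simp; linarith) hc, sub_add_cancel, neg_div_neg_eq]

end PowerIntegrals

theorem integrableOn_and_setIntegral_eq_of_eqOn {S : Set ℝ} (hS : MeasurableSet S)
    {F f₀ f₁ f₂ : ℝ → ℂ} (a b : ℂ) (hF : EqOn F (fun y => f₀ y + a * f₁ y + b * f₂ y) S)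
    (h₀ : IntegrableOn f₀ S) (h₁ : IntegrableOn f₁ S) (h₂ : IntegrableOn f₂ S) :
    IntegrableOn F S ∧
      ∫ y in S, F y = (∫ y in S, f₀ y) + a * (∫ y in S, f₁ y) + b * ∫ y in S, f₂ y := by
  have h₀₁ : IntegrableOn (fun y => f₀ y + a * f₁ y) S := h₀.add (h₁.const_mul a)
  refine ⟨(integrableOn_congr_fun hF hS).2 (h₀₁.add (h₂.const_mul b)), ?_⟩
  rw [setIntegral_congr_fun hS hF, integral_add h₀₁ (h₂.const_mul b),
    integral_add h₀ (h₁.const_mul a), integral_const_mul, integral_const_mul]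

theorem setIntegral_Ioi_mul_cpow_add_mul_cpow_neg_div {h : ℝ → ℂ} {c : ℝ} (hc : 0 < c) {s : ℂ}
    (hs : IntegrableOn (fun y : ℝ => (y : ℂ) ^ (s - 1) * h y) (Ioi c))
    (hs' : IntegrableOn (fun y : ℝ => (y : ℂ) ^ (-s - 1) * h y) (Ioi c)) (K : ℂ) :
    ∫ y in Ioi c, h y * ((y : ℂ) ^ s + K * (y : ℂ) ^ (-s)) / (y : ℂ)
      = (∫ y in Ioi c, (y : ℂ) ^ (s - 1) * h y) + K * ∫ y in Ioi c, (y : ℂ) ^ (-s - 1) * h y := by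
  rw [← integral_const_mul, ← integral_add hs (hs'.const_mul K)]
  refine setIntegral_congr_fun measurableSet_Ioi fun y hy => ?_
  have hy : (y : ℂ) ≠ 0 := by exact_mod_cast (hc.trans hy).ne'
  simp only [Complex.cpow_sub _ _ hy, Complex.cpow_one]
  field_simp

section ExponentialDecay

variable {h : ℝ → ℂ} {c C κ : ℝ}

lemma integrable_indicator_Ici_of_norm_le_exp (hm : Measurable h) (hκ : 0 < κ)
    (hbd : ∀ y, c ≤ y → ‖h y‖ ≤ C * Real.exp (-κ * y)) : Integrable ((Ici c).indicator h) := by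
  rw [integrable_indicator_iff measurableSet_Ici, integrableOn_Ici_iff_integrableOn_Ioi]
  exact ((exp_neg_integrableOn_Ioi c hκ).const_mul C).mono' hm.aestronglyMeasurable
    (ae_restrict_of_forall_mem measurableSet_Ioi fun y hy => hbd y hy.le)

lemma indicator_Ici_isBigO_exp (hbd : ∀ y, c ≤ y → ‖h y‖ ≤ C * Real.exp (-κ * y)) :
    (Ici c).indicator h =O[atTop] fun t => Real.exp (-κ * t) := by
  refine isBigO_iff.2 ⟨C, ?_⟩
  filter_upwards [eventually_ge_atTop c] with y hy
  rw [indicator_of_mem (mem_Ici.2 hy), Real.norm_of_nonneg (Real.exp_pos _).le]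
  exact hbd y hy

lemma indicator_Ici_isBigO_rpow (hc : 0 < c) (b : ℝ) :
    (Ici c).indicator h =O[𝓝[>] 0] (· ^ (-b)) := by
  refine EventuallyEq.trans_isBigO ?_ (isBigO_zero _ _)
  filter_upwards [mem_nhdsWithin_of_mem_nhds (Iio_mem_nhds hc)] with y hy
  exact indicator_of_notMem (not_le.2 hy) h

lemma mellinConvergent_indicator_Ici_iff (hc : 0 < c) (σ : ℂ) :
    MellinConvergent ((Ici c).indicator h) σ
      ↔ IntegrableOn (fun y : ℝ => (y : ℂ) ^ (σ - 1) * h y) (Ioi c) := by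
  simp_rw [MellinConvergent, ← indicator_smul, smul_eq_mul]
  rw [integrableOn_indicator_iff measurableSet_Ici, inter_eq_left.2 (Ici_subset_Ioi.2 hc),
    integrableOn_Ici_iff_integrableOn_Ioi]

lemma mellin_indicator_Ici (hc : 0 < c) (σ : ℂ) :
    mellin ((Ici c).indicator h) σ = ∫ y in Ioi c, (y : ℂ) ^ (σ - 1) * h y := by
  simp_rw [mellin, ← indicator_smul, smul_eq_mul]
  rw [setIntegral_indicator measurableSet_Ici, inter_eq_right.2 (Ici_subset_Ioi.2 hc),
    integral_Ici_eq_integral_Ioi]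

theorem integrableOn_Ioi_cpow_sub_one_mul_of_norm_le_exp (hc : 0 < c) (hm : Measurable h)
    (hκ : 0 < κ) (hbd : ∀ y, c ≤ y → ‖h y‖ ≤ C * Real.exp (-κ * y)) (σ : ℂ) :
    IntegrableOn (fun y : ℝ => (y : ℂ) ^ (σ - 1) * h y) (Ioi c) :=
  (mellinConvergent_indicator_Ici_iff hc σ).1 <| mellinConvergent_of_isBigO_rpow_exp hκ
    (integrable_indicator_Ici_of_norm_le_exp hm hκ hbd).integrableOn.locallyIntegrableOn
    (indicator_Ici_isBigO_exp hbd) (indicator_Ici_isBigO_rpow hc (σ.re - 1)) (sub_one_lt _)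

theorem differentiable_mellin_indicator_Ici_of_norm_le_exp (hc : 0 < c) (hm : Measurable h)
    (hκ : 0 < κ) (hbd : ∀ y, c ≤ y → ‖h y‖ ≤ C * Real.exp (-κ * y)) :
    Differentiable ℂ (mellin ((Ici c).indicator h)) := fun σ =>
  mellin_differentiableAt_of_isBigO_rpow_exp hκ
    (integrable_indicator_Ici_of_norm_le_exp hm hκ hbd).integrableOn.locallyIntegrableOn
    (indicator_Ici_isBigO_exp hbd) (indicator_Ici_isBigO_rpow hc (σ.re - 1)) (sub_one_lt _)

theorem differentiable_setIntegral_Ioi_mul_cpow_add_cpow_neg_mul_cpow_neg_div (hc : 0 < c)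
    (hm : Measurable h) (hκ : 0 < κ) (hbd : ∀ y, c ≤ y → ‖h y‖ ≤ C * Real.exp (-κ * y))
    {K : ℂ} (hK : K ≠ 0) :
    Differentiable ℂ fun s : ℂ =>
      ∫ y in Ioi c, h y * ((y : ℂ) ^ s + K ^ (-s) * (y : ℂ) ^ (-s)) / (y : ℂ) := by
  have hM := differentiable_mellin_indicator_Ici_of_norm_le_exp hc hm hκ hbd
  have hint := integrableOn_Ioi_cpow_sub_one_mul_of_norm_le_exp hc hm hκ hbd
  simp only [setIntegral_Ioi_mul_cpow_add_mul_cpow_neg_div hc (hint _) (hint (-_)),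
    ← mellin_indicator_Ici hc]
  exact hM.add ((differentiable_neg.const_cpow (Or.inl hK)).mul (hM.comp differentiable_neg))

end ExponentialDecay

section InvariantFunction

variable {N c C : ℝ} {g h : ℝ → ℂ} {a b w s : ℂ}

theorem integrableOn_and_setIntegral_Ioo_mul_cpow_of_invariant (hN : 0 < N) (hc : 0 < c)
    (hfun : ∀ y : ℝ, 0 < y → g (1 / (N * y)) = g y)
    (hsplit : ∀ y : ℝ, c ≤ y → g y = a * (y : ℂ) ^ w + b * (y : ℂ) ^ (1 - w) + h y)
    (hh : IntegrableOn (fun u : ℝ => (u : ℂ) ^ (-s - 1) * h u) (Ioi c))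
    (hsw : 0 < (s - w).re) (hsw' : 0 < (s + w - 1).re) :
    IntegrableOn (fun y => g y * (y : ℂ) ^ (s - 1)) (Ioo 0 (1 / (N * c))) ∧
      ∫ y in Ioo 0 (1 / (N * c)), g y * (y : ℂ) ^ (s - 1)
        = (N : ℂ) ^ (-s) * ((∫ u in Ioi c, (u : ℂ) ^ (-s - 1) * h u)
          + a * ((c : ℂ) ^ (-(s - w)) / (s - w))
          + b * ((c : ℂ) ^ (-(s + w - 1)) / (s + w - 1))) := by
  have hEq : EqOn (fun u => g (1 / (N * u)) * (u : ℂ) ^ (-s - 1))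
      (fun u => (u : ℂ) ^ (-s - 1) * h u + a * (u : ℂ) ^ (-(s - w) - 1)
        + b * (u : ℂ) ^ (-(s + w - 1) - 1)) (Ioi c) := by
    intro u hu
    have hu0 : (u : ℂ) ≠ 0 := by exact_mod_cast (hc.trans hu).ne'
    simp only
    rw [hfun u (hc.trans hu), hsplit u hu.le, show -(s - w) - 1 = w + (-s - 1) by ring,
      show -(s + w - 1) - 1 = (1 - w) + (-s - 1) by ring, Complex.cpow_add _ _ hu0,
      Complex.cpow_add _ _ hu0]
    ring
  obtain ⟨hint, hval⟩ := integrableOn_and_setIntegral_eq_of_eqOn measurableSet_Ioi a b hEq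
    hh (integrableOn_Ioi_cpow_neg_sub_one hsw hc) (integrableOn_Ioi_cpow_neg_sub_one hsw' hc)
  refine ⟨(integrableOn_Ioo_mul_cpow_iff hN hc g s).2 hint, ?_⟩
  rw [setIntegral_Ioo_mul_cpow_eq hN hc, hval, setIntegral_Ioi_cpow_neg_sub_one hsw hc,
    setIntegral_Ioi_cpow_neg_sub_one hsw' hc]

theorem integrableOn_and_setIntegral_Ioo_sub_mul_cpow (hc : 0 < c)
    (hg : IntegrableOn (fun y => g y * (y : ℂ) ^ (s - 1)) (Ioo 0 c))
    (hsw : 0 < (s + w).re) (hsw' : 0 < (s + 1 - w).re) :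
    IntegrableOn (fun y => (g y - (a * (y : ℂ) ^ w + b * (y : ℂ) ^ (1 - w))) * (y : ℂ) ^ (s - 1))
        (Ioo 0 c) ∧
      ∫ y in Ioo 0 c, (g y - (a * (y : ℂ) ^ w + b * (y : ℂ) ^ (1 - w))) * (y : ℂ) ^ (s - 1)
        = (∫ y in Ioo 0 c, g y * (y : ℂ) ^ (s - 1))
          - a * ((c : ℂ) ^ (s + w) / (s + w)) - b * ((c : ℂ) ^ (s + 1 - w) / (s + 1 - w)) := by
  have hEq : EqOn (fun y => (g y - (a * (y : ℂ) ^ w + b * (y : ℂ) ^ (1 - w))) * (y : ℂ) ^ (s - 1))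
      (fun y => g y * (y : ℂ) ^ (s - 1) + (-a) * (y : ℂ) ^ (s + w - 1)
        + (-b) * (y : ℂ) ^ (s + 1 - w - 1)) (Ioo 0 c) := by
    intro y hy
    have hy0 : (y : ℂ) ≠ 0 := by exact_mod_cast hy.1.ne'
    simp only
    rw [show s + w - 1 = w + (s - 1) by ring, show s + 1 - w - 1 = (1 - w) + (s - 1) by ring,
      Complex.cpow_add _ _ hy0, Complex.cpow_add _ _ hy0]
    ring
  obtain ⟨hint, hval⟩ := integrableOn_and_setIntegral_eq_of_eqOn measurableSet_Ioo (-a) (-b) hEq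
    hg (integrableOn_Ioo_cpow_sub_one hsw hc) (integrableOn_Ioo_cpow_sub_one hsw' hc)
  refine ⟨hint, ?_⟩
  rw [hval, setIntegral_Ioo_cpow_sub_one hsw hc.le, setIntegral_Ioo_cpow_sub_one hsw' hc.le]
  ring

theorem setIntegral_Ioi_sub_mul_cpow_eq_of_invariant (hN : 0 < N)
    (hfun : ∀ y : ℝ, 0 < y → g (1 / (N * y)) = g y) (hm : Measurable h)
    (hbd : ∀ y : ℝ, 1 / √N ≤ y → ‖h y‖ ≤ C * Real.exp (-Real.pi * y))
    (hsplit : ∀ y : ℝ, 1 / √N ≤ y → g y = a * (y : ℂ) ^ w + b * (y : ℂ) ^ (1 - w) + h y)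
    (hs : max w.re (1 - w).re < s.re) :
    ∫ y in Ioi (0 : ℝ), (g y - (a * (y : ℂ) ^ w + b * (y : ℂ) ^ (1 - w))) * (y : ℂ) ^ (s - 1)
      = (∫ y in Ioi (1 / √N), h y * ((y : ℂ) ^ s + (N : ℂ) ^ (-s) * (y : ℂ) ^ (-s)) / (y : ℂ))
        + a * (√N : ℂ) ^ (-s - w) / (s - w) + b * (√N : ℂ) ^ (w - 1 - s) / (s + w - 1)
        - a * (√N : ℂ) ^ (-s - w) / (s + w) - b * (√N : ℂ) ^ (-s + w - 1) / (s - w + 1) := by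
  have hc : 0 < 1 / √N := by positivity
  have hNc : 1 / (N * (1 / √N)) = 1 / √N := by rw [mul_one_div, Real.div_sqrt]
  obtain ⟨hs₁, hs₂⟩ := max_lt_iff.1 hs
  simp only [Complex.sub_re, Complex.one_re] at hs₂
  have hint := integrableOn_Ioi_cpow_sub_one_mul_of_norm_le_exp hc hm Real.pi_pos hbd
  obtain ⟨hgi, hg⟩ := integrableOn_and_setIntegral_Ioo_mul_cpow_of_invariant hN hc hfun hsplit
    (hint (-s)) (by simp; linarith) (by simp; linarith)
  rw [hNc] at hgi hg
  obtain ⟨hΦi, hΦ⟩ := integrableOn_and_setIntegral_Ioo_sub_mul_cpow (a := a) (b := b) hc hgi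
    (by simp; linarith) (by simp; linarith)
  have hΦ_Ioi : EqOn
      (fun y => (g y - (a * (y : ℂ) ^ w + b * (y : ℂ) ^ (1 - w))) * (y : ℂ) ^ (s - 1))
      (fun y => (y : ℂ) ^ (s - 1) * h y) (Ioi (1 / √N)) := fun y hy => by
    simp only
    rw [hsplit y hy.le]
    ring
  rw [← Ioc_union_Ioi_eq_Ioi hc.le, setIntegral_union Ioc_disjoint_Ioi_same measurableSet_Ioi
      ((integrableOn_Ioc_iff_integrableOn_Ioo).2 hΦi)
      ((integrableOn_congr_fun hΦ_Ioi measurableSet_Ioi).2 (hint s)),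
    integral_Ioc_eq_integral_Ioo, hΦ, hg, setIntegral_congr_fun measurableSet_Ioi hΦ_Ioi,
    setIntegral_Ioi_mul_cpow_add_mul_cpow_neg_div hc (hint s) (hint (-s))]
  have e₁ : (N : ℂ) ^ (-s) * ((1 / √N : ℝ) : ℂ) ^ (-(s - w)) = (√N : ℂ) ^ (-s - w) := by
    rw [cpow_neg_mul_one_div_sqrt_cpow hN]; ring_nf
  have e₂ : (N : ℂ) ^ (-s) * ((1 / √N : ℝ) : ℂ) ^ (-(s + w - 1)) = (√N : ℂ) ^ (w - 1 - s) := by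
    rw [cpow_neg_mul_one_div_sqrt_cpow hN]; ring_nf
  have e₃ : ((1 / √N : ℝ) : ℂ) ^ (s + w) = (√N : ℂ) ^ (-s - w) := by
    rw [Complex.ofReal_one_div_cpow (Real.sqrt_nonneg N)]; ring_nf
  have e₄ : ((1 / √N : ℝ) : ℂ) ^ (s + 1 - w) = (√N : ℂ) ^ (-s + w - 1) := by
    rw [Complex.ofReal_one_div_cpow (Real.sqrt_nonneg N)]; ring_nf
  linear_combination (a / (s - w)) * e₁ + (b / (s + w - 1)) * e₂ - (a / (s + w)) * e₃
    - (b / (s - w + 1)) * e₄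

end InvariantFunction

/-- The key splitting of the completed L-function: if `g(1/(N y)) = g(y)` for `y > 0`
and `g(y) = a y^w + b y^{1-w} + h(y)` on `[1/√N, ∞)` with `|h(y)| ≤ C e^{-π y}`, then
for `Re(s) > max(Re w, Re(1-w))`,
`Λ(s) = ∫_0^∞ (g(y) - a y^w - b y^{1-w}) y^{s-1} dy` equals
`∫_{1/√N}^∞ h(y)(y^s + N^{-s} y^{-s}) dy/y + a(√N)^{-s-w}/(s-w) + b(√N)^{w-1-s}/(s+w-1)
 - a(√N)^{-s-w}/(s+w) - b(√N)^{-s+w-1}/(s-w+1)`;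
since the `h`-integral is an entire function of `s`, `Λ` extends meromorphically to `ℂ`
with at most simple poles at `s = w, -w, 1-w, w-1`. -/
theorem completed_L_function_splitting
    (N : ℝ) (hN : 0 < N) (g h : ℝ → ℂ) (a b w : ℂ) (C : ℝ)
    (hfun : ∀ y : ℝ, 0 < y → g (1 / (N * y)) = g y)
    (hm : Measurable h)
    (hbd : ∀ y : ℝ, 1 / Real.sqrt N ≤ y → ‖h y‖ ≤ C * Real.exp (-Real.pi * y))
    (hsplit : ∀ y : ℝ, 1 / Real.sqrt N ≤ y →
      g y = a * (y : ℂ) ^ w + b * (y : ℂ) ^ (1 - w) + h y) :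
    (∀ s : ℂ, max w.re (1 - w).re < s.re →
      (∫ y in Ioi (0 : ℝ),
          (g y - (a * (y : ℂ) ^ w + b * (y : ℂ) ^ (1 - w))) * (y : ℂ) ^ (s - 1))
        = (∫ y in Ioi (1 / Real.sqrt N),
            h y * ((y : ℂ) ^ s + (N : ℂ) ^ (-s) * (y : ℂ) ^ (-s)) / (y : ℂ))
          + a * ((Real.sqrt N : ℂ)) ^ (-s - w) / (s - w)
          + b * ((Real.sqrt N : ℂ)) ^ (w - 1 - s) / (s + w - 1)
          - a * ((Real.sqrt N : ℂ)) ^ (-s - w) / (s + w)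
          - b * ((Real.sqrt N : ℂ)) ^ (-s + w - 1) / (s - w + 1)) ∧
    ∃ F : ℂ → ℂ, Differentiable ℂ F ∧ ∀ s : ℂ,
      F s = ∫ y in Ioi (1 / Real.sqrt N),
        h y * ((y : ℂ) ^ s + (N : ℂ) ^ (-s) * (y : ℂ) ^ (-s)) / (y : ℂ) :=
  ⟨fun _ hs => setIntegral_Ioi_sub_mul_cpow_eq_of_invariant hN hfun hm hbd hsplit hs,
    _, differentiable_setIntegral_Ioi_mul_cpow_add_cpow_neg_mul_cpow_neg_div (by positivity) hm
      Real.pi_pos hbd (by exact_mod_cast hN.ne'), fun _ => rfl⟩
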